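/- arXiv:2603.14749 — 4 statements merged into one kernel-verified Lean document; each statement's English description precedes it below -/
import Mathlib

section
/- Let G be a finite simple 3-regular graph with vertex set V and edge set E, and let k be a positive integer. Then there exists a polynomial P in two variables with integer coefficients such that for all complex numbers a and b, (Z_G(a,b))^k = P(ab, a^3 + b^3). -/
open Finset

/-- Boolean predicate on edges: both endpoints of the edge are assigned value `c` by `τ`. -/
def bothVal {V : Type*} (τ : V → Bool) (c : Bool) : Sym2 V → Bool :=
  Sym2.lift ⟨fun x y => (τ x == c) && (τ y == c), fun x y => by simp [Bool.and_comm]⟩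

/-- Number of edges of `G` both of whose endpoints are assigned `0` (i.e. `false`) by `τ`. -/
def e00 {V : Type*} [Fintype V] [DecidableEq V] (G : SimpleGraph V) [DecidableRel G.Adj]
    (τ : V → Bool) : ℕ :=
  (G.edgeFinset.filter fun e => bothVal τ false e).card

/-- Number of edges of `G` both of whose endpoints are assigned `1` (i.e. `true`) by `τ`. -/
def e11 {V : Type*} [Fintype V] [DecidableEq V] (G : SimpleGraph V) [DecidableRel G.Adj]
    (τ : V → Bool) : ℕ :=
  (G.edgeFinset.filter fun e => bothVal τ true e).card

/-- The partition function `Z_G(a,b) = Σ_{τ : V → {0,1}} a^{e₀₀(τ)} · b^{e₁₁(τ)}`. -/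
noncomputable def Z {V : Type*} [Fintype V] [DecidableEq V] (G : SimpleGraph V) [DecidableRel G.Adj]
    (a b : ℂ) : ℂ :=
  ∑ τ : V → Bool, a ^ e00 G τ * b ^ e11 G τ

section Aux

open MvPolynomial

/-- The subalgebra generated by `XY` and `X³+Y³`. -/
noncomputable def SS : Subalgebra ℤ (MvPolynomial (Fin 2) ℤ) :=
  Algebra.adjoin ℤ ({X 0 * X 1, X 0 ^ 3 + X 1 ^ 3} : Set (MvPolynomial (Fin 2) ℤ))

lemma XY_mem : (X 0 * X 1 : MvPolynomial (Fin 2) ℤ) ∈ SS :=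
  Algebra.subset_adjoin (by simp)

lemma X3Y3_mem : (X 0 ^ 3 + X 1 ^ 3 : MvPolynomial (Fin 2) ℤ) ∈ SS :=
  Algebra.subset_adjoin (by simp)

lemma pow3_mem (t : ℕ) :
    (X 0 : MvPolynomial (Fin 2) ℤ) ^ (3 * t) + (X 1) ^ (3 * t) ∈ SS := by
  induction t using Nat.twoStepInduction with
  | zero => simpa using (SS.add_mem SS.one_mem SS.one_mem)
  | one => simpa using X3Y3_mem
  | more n ih1 ih2 =>
    have key : (X 0 : MvPolynomial (Fin 2) ℤ) ^ (3 * (n + 2)) + (X 1) ^ (3 * (n + 2)) =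
        (X 0 ^ 3 + X 1 ^ 3) * ((X 0) ^ (3 * (n + 1)) + (X 1) ^ (3 * (n + 1)))
          - (X 0 * X 1) ^ 3 * ((X 0) ^ (3 * n) + (X 1) ^ (3 * n)) := by
      ring
    rw [key]
    exact SS.sub_mem (SS.mul_mem X3Y3_mem ih2) (SS.mul_mem (SS.pow_mem XY_mem 3) ih1)

lemma sym_mem {i j : ℕ} (h : i % 3 = j % 3) :
    (X 0 : MvPolynomial (Fin 2) ℤ) ^ i * (X 1) ^ j + (X 0) ^ j * (X 1) ^ i ∈ SS := by
  rcases le_total i j with hle | hle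
  · obtain ⟨t, rfl⟩ : ∃ t, j = i + 3 * t := ⟨(j - i) / 3, by omega⟩
    have key : (X 0 : MvPolynomial (Fin 2) ℤ) ^ i * (X 1) ^ (i + 3 * t)
        + (X 0) ^ (i + 3 * t) * (X 1) ^ i
        = (X 0 * X 1) ^ i * ((X 0) ^ (3 * t) + (X 1) ^ (3 * t)) := by ring
    rw [key]
    exact SS.mul_mem (SS.pow_mem XY_mem i) (pow3_mem t)
  · obtain ⟨t, rfl⟩ : ∃ t, i = j + 3 * t := ⟨(i - j) / 3, by omega⟩
    have key : (X 0 : MvPolynomial (Fin 2) ℤ) ^ (j + 3 * t) * (X 1) ^ j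
        + (X 0) ^ j * (X 1) ^ (j + 3 * t)
        = (X 0 * X 1) ^ j * ((X 0) ^ (3 * t) + (X 1) ^ (3 * t)) := by ring
    rw [key]
    exact SS.mul_mem (SS.pow_mem XY_mem j) (pow3_mem t)

end Aux

section Graph

variable {V : Type*} [Fintype V] [DecidableEq V] (G : SimpleGraph V) [DecidableRel G.Adj]

/-- number of endpoints of an edge assigned value `c`, counted with multiplicity. -/
def cnt (τ : V → Bool) (c : Bool) : Sym2 V → ℕ :=
  Sym2.lift ⟨fun x y => (if τ x = c then 1 else 0) + (if τ y = c then 1 else 0),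
    fun x y => by simp [Nat.add_comm]⟩

lemma dart_count_eq_deg_sum (τ : V → Bool) (c : Bool) :
    (Finset.univ.filter fun d : G.Dart => τ d.fst = c).card
      = ∑ v ∈ Finset.univ.filter (fun v => τ v = c), G.degree v := by
  rw [Finset.card_eq_sum_card_fiberwise
    (f := fun d : G.Dart => d.fst) (t := Finset.univ.filter (fun v => τ v = c))
    (fun d hd => by simp_all)]
  refine Finset.sum_congr rfl fun v hv => ?_
  rw [← SimpleGraph.dart_fst_fiber_card_eq_degree]
  congr 1
  ext d
  simp only [Finset.mem_filter, Finset.mem_univ, true_and]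
  constructor
  · rintro ⟨-, rfl⟩; rfl
  · rintro rfl
    exact ⟨by simpa using hv, rfl⟩

lemma dart_count_eq_edge_sum (τ : V → Bool) (c : Bool) :
    (Finset.univ.filter fun d : G.Dart => τ d.fst = c).card
      = ∑ e ∈ G.edgeFinset, cnt τ c e := by
  rw [Finset.card_eq_sum_card_fiberwise
    (f := fun d : G.Dart => d.edge) (t := G.edgeFinset)
    (fun d _ => by simp [SimpleGraph.edgeFinset, d.edge_mem])]
  refine Finset.sum_congr rfl fun e he => ?_
  induction e with
  | _ x y =>
    have hadj : G.Adj x y := by simpa [SimpleGraph.mem_edgeFinset] using he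
    set d0 : G.Dart := ⟨(x, y), hadj⟩ with hd0
    have hfib : ((Finset.univ.filter fun d : G.Dart => τ d.fst = c).filter
        fun d => d.edge = s(x, y)) = ({d0, d0.symm} : Finset G.Dart).filter
        fun d => τ d.fst = c := by
      ext d
      have := d0.edge_fiber
      have hd : d.edge = s(x,y) ↔ d ∈ ({d0, d0.symm} : Finset G.Dart) := by
        constructor
        · intro h
          have : d ∈ ({d' : G.Dart | d'.edge = d0.edge} : Finset _) := by
            simp only [Finset.mem_filter, Finset.mem_univ, true_and]
            simpa [hd0] using h
          rwa [d0.edge_fiber] at this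
        · intro h
          rcases Finset.mem_insert.mp h with rfl | h
          · rfl
          · rw [Finset.mem_singleton.mp h]
            simp [SimpleGraph.Dart.edge_symm, hd0]
      simp only [Finset.mem_filter, Finset.mem_univ, true_and] at *
      tauto
    rw [hfib, Finset.card_filter, Finset.sum_insert (by simpa using d0.symm_ne.symm),
      Finset.sum_singleton]
    simp [cnt, hd0, SimpleGraph.Dart.symm]

lemma e_card_eq (τ : V → Bool) (c : Bool) :
    ((G.edgeFinset.filter fun e => bothVal τ c e).card : ℕ)
      = ∑ e ∈ G.edgeFinset, (if bothVal τ c e then 1 else 0) := by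
  rw [Finset.card_filter]

lemma mod3_key (hreg : G.IsRegularOfDegree 3) (τ : V → Bool) :
    e00 G τ % 3 = e11 G τ % 3 := by
  have hper : ∀ e ∈ G.edgeFinset,
      cnt τ false e + 2 * (if bothVal τ true e then 1 else 0)
        = cnt τ true e + 2 * (if bothVal τ false e then 1 else 0) := by
    intro e _
    induction e with
    | _ x y => cases hx : τ x <;> cases hy : τ y <;> simp [cnt, bothVal, hx, hy]
  have hsum := Finset.sum_congr rfl hper
  rw [Finset.sum_add_distrib, Finset.sum_add_distrib, ← Finset.mul_sum, ← Finset.mul_sum,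
    ← dart_count_eq_edge_sum G τ false, ← dart_count_eq_edge_sum G τ true,
    ← e_card_eq G τ false, ← e_card_eq G τ true,
    dart_count_eq_deg_sum G τ false, dart_count_eq_deg_sum G τ true] at hsum
  have hd : ∀ c : Bool, ∑ v ∈ Finset.univ.filter (fun v => τ v = c), G.degree v
      = 3 * (Finset.univ.filter (fun v => τ v = c)).card := by
    intro c
    rw [Finset.sum_congr rfl (fun v _ => hreg v), Finset.sum_const, smul_eq_mul, mul_comm]
  rw [hd false, hd true] at hsum
  unfold e00 e11
  omega

lemma e00_neg (τ : V → Bool) : e00 G (fun v => !τ v) = e11 G τ := by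
  unfold e00 e11
  congr 1
  apply Finset.filter_congr
  intro e _
  induction e with
  | _ x y => simp [bothVal]

lemma e11_neg (τ : V → Bool) : e11 G (fun v => !τ v) = e00 G τ := by
  unfold e00 e11
  congr 1
  apply Finset.filter_congr
  intro e _
  induction e with
  | _ x y => simp [bothVal]

open MvPolynomial in
lemma Q_mem (hreg : G.IsRegularOfDegree 3) :
    (∑ τ : V → Bool, (X 0 : MvPolynomial (Fin 2) ℤ) ^ e00 G τ * (X 1) ^ e11 G τ) ∈ SS := by
  by_cases hV : Nonempty V
  · obtain ⟨v0⟩ := hV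
    rw [← Finset.sum_filter_add_sum_filter_not Finset.univ (fun τ : V → Bool => τ v0 = false)]
    have hswap : ∑ τ ∈ Finset.univ.filter (fun τ : V → Bool => ¬ τ v0 = false),
        (X 0 : MvPolynomial (Fin 2) ℤ) ^ e00 G τ * (X 1) ^ e11 G τ
        = ∑ τ ∈ Finset.univ.filter (fun τ : V → Bool => τ v0 = false),
        (X 0 : MvPolynomial (Fin 2) ℤ) ^ e11 G τ * (X 1) ^ e00 G τ := by
      apply Finset.sum_nbij' (i := fun τ => fun v => !τ v) (j := fun τ => fun v => !τ v)
      · intro τ hτ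
        simp only [Finset.mem_filter, Finset.mem_univ, true_and] at *
        simp_all
      · intro τ hτ
        simp only [Finset.mem_filter, Finset.mem_univ, true_and] at *
        simp_all
      · intro τ _; funext v; simp
      · intro τ _; funext v; simp
      · intro τ _
        rw [e00_neg, e11_neg]
    rw [hswap, ← Finset.sum_add_distrib]
    apply SS.sum_mem
    intro τ _
    exact sym_mem (mod3_key G hreg τ)
  · apply SS.sum_mem
    intro τ _
    have h0 : e00 G τ = 0 := by
      simp only [e00, Finset.card_eq_zero]
      apply Finset.eq_empty_of_forall_notMem
      intro e he
      rw [Finset.mem_filter, SimpleGraph.mem_edgeFinset] at he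
      induction e with
      | _ x y => exact hV ⟨x⟩
    have h1 : e11 G τ = 0 := by
      simp only [e11, Finset.card_eq_zero]
      apply Finset.eq_empty_of_forall_notMem
      intro e he
      rw [Finset.mem_filter, SimpleGraph.mem_edgeFinset] at he
      induction e with
      | _ x y => exact hV ⟨x⟩
    rw [h0, h1]
    simpa using SS.one_mem

end Graph

/-- For a finite simple 3-regular graph `G` and a positive integer `k`,
there is a two-variable integer polynomial `P` such that for all `a b : ℂ`,
`(Z_G(a,b))^k = P(ab, a³+b³)`. -/
theorem holant_pow_is_poly_in_X_Y {V : Type*} [Fintype V] [DecidableEq V]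
    (G : SimpleGraph V) [DecidableRel G.Adj] (hreg : G.IsRegularOfDegree 3)
    (k : ℕ) (hk : 0 < k) :
    ∃ P : MvPolynomial (Fin 2) ℤ, ∀ a b : ℂ,
      (Z G a b) ^ k = MvPolynomial.aeval ![a * b, a ^ 3 + b ^ 3] P := by
  classical
  open MvPolynomial in
  · have hQ := Q_mem G hreg
    set Q : MvPolynomial (Fin 2) ℤ :=
      ∑ τ : V → Bool, (X 0 : MvPolynomial (Fin 2) ℤ) ^ e00 G τ * (X 1) ^ e11 G τ with hQdef
    have hrange : SS = (MvPolynomial.aeval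
        (![X 0 * X 1, X 0 ^ 3 + X 1 ^ 3] : Fin 2 → MvPolynomial (Fin 2) ℤ)).range := by
      rw [SS, ← Algebra.adjoin_range_eq_range_aeval]
      congr 1
      ext p
      constructor
      · rintro (rfl | rfl)
        · exact ⟨0, rfl⟩
        · exact ⟨1, rfl⟩
      · rintro ⟨i, rfl⟩
        fin_cases i
        · left; rfl
        · right; rfl
    rw [hrange, AlgHom.mem_range] at hQ
    obtain ⟨P, hP⟩ := hQ
    refine ⟨P ^ k, fun a b => ?_⟩
    have hZ : Z G a b = MvPolynomial.aeval ![a, b] Q := by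
      rw [Z, hQdef, map_sum]
      refine Finset.sum_congr rfl fun τ _ => ?_
      simp
    have hfun : (fun i => MvPolynomial.aeval ![a, b]
        ((![X 0 * X 1, X 0 ^ 3 + X 1 ^ 3] : Fin 2 → MvPolynomial (Fin 2) ℤ) i))
        = ![a * b, a ^ 3 + b ^ 3] := by
      funext i; fin_cases i <;> simp
    have hcomp : ∀ R : MvPolynomial (Fin 2) ℤ, MvPolynomial.aeval ![a, b]
        (MvPolynomial.aeval (![X 0 * X 1, X 0 ^ 3 + X 1 ^ 3] :
          Fin 2 → MvPolynomial (Fin 2) ℤ) R)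
        = MvPolynomial.aeval ![a * b, a ^ 3 + b ^ 3] R := by
      intro R; rw [MvPolynomial.comp_aeval_apply, hfun]
    rw [hZ, ← hP, ← map_pow, ← map_pow, hcomp]
end

section
/- Let G be a finite simple 3-regular graph. If a, b, a', b' are complex numbers satisfying ab = a'b' and a^3 + b^3 = a'^3 + b'^3, then Z_G(a,b) = Z_G(a',b'). -/
open Finset

/-- Power sums of `a^3, b^3` as polynomials in `X = ab`, `Y = a³+b³`. -/
noncomputable def Ppow (X Y : ℂ) : ℕ → ℂ
  | 0 => 2
  | 1 => Y
  | (n+2) => Y * Ppow X Y (n+1) - X^3 * Ppow X Y n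

lemma Ppow_spec (a b : ℂ) (t : ℕ) :
    a ^ (3*t) + b ^ (3*t) = Ppow (a*b) (a^3+b^3) t := by
  induction t using Nat.twoStepInduction with
  | zero => simp [Ppow]; norm_num
  | one => simp [Ppow]
  | more n ih1 ih2 =>
    show a ^ (3*(n+2)) + b ^ (3*(n+2)) = Ppow (a*b) (a^3+b^3) (n+2)
    rw [show Ppow (a*b) (a^3+b^3) (n+2) =
      (a^3+b^3) * Ppow (a*b) (a^3+b^3) (n+1) - (a*b)^3 * Ppow (a*b) (a^3+b^3) n from rfl,
      ← ih1, ← ih2]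
    ring

lemma key_alg (a b a' b' : ℂ) (hX : a * b = a' * b') (hY : a ^ 3 + b ^ 3 = a' ^ 3 + b' ^ 3)
    (d t : ℕ) :
    a ^ (d+3*t) * b ^ d + a ^ d * b ^ (d+3*t)
      = a' ^ (d+3*t) * b' ^ d + a' ^ d * b' ^ (d+3*t) := by
  have h1 := Ppow_spec a b t
  have h2 := Ppow_spec a' b' t
  have e1 : a ^ (d+3*t) * b ^ d + a ^ d * b ^ (d+3*t)
      = (a*b)^d * (a^(3*t) + b^(3*t)) := by ring
  have e2 : a' ^ (d+3*t) * b' ^ d + a' ^ d * b' ^ (d+3*t)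
      = (a'*b')^d * (a'^(3*t) + b'^(3*t)) := by ring
  rw [e1, e2, h1, h2, hX, hY]

/-- Complementing `τ` swaps `e00` and `e11`. -/
lemma e00_not {V : Type*} [Fintype V] [DecidableEq V] (G : SimpleGraph V) [DecidableRel G.Adj]
    (τ : V → Bool) : e00 G (fun v => !τ v) = e11 G τ := by
  unfold e00 e11
  congr 1
  apply Finset.filter_congr
  intro e _
  induction e using Sym2.ind with
  | _ x y => simp [bothVal]

lemma e11_not {V : Type*} [Fintype V] [DecidableEq V] (G : SimpleGraph V) [DecidableRel G.Adj]
    (τ : V → Bool) : e11 G (fun v => !τ v) = e00 G τ := by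
  unfold e00 e11
  congr 1
  apply Finset.filter_congr
  intro e _
  induction e using Sym2.ind with
  | _ x y => simp [bothVal]

/-- The counting identity: `e00 + 3k = m + e11` where `k` is the number of `true` vertices. -/
lemma counting {V : Type*} [Fintype V] [DecidableEq V] (G : SimpleGraph V) [DecidableRel G.Adj]
    (hreg : G.IsRegularOfDegree 3) (τ : V → Bool) :
    e00 G τ + 3 * (univ.filter fun v => τ v = true).card
      = G.edgeFinset.card + e11 G τ := by
  classical
  set S : Finset V := univ.filter fun v => τ v = true with hS
  -- weight of an edge: number of `true` endpoints
  set w : Sym2 V → ℕ :=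
    Sym2.lift ⟨fun x y => (if τ x then 1 else 0) + (if τ y then 1 else 0),
      fun x y => by dsimp only; exact add_comm _ _⟩ with hw
  -- Step B: sum of weights over edges equals sum of degrees over S
  have hB : ∑ e ∈ G.edgeFinset, w e = ∑ v ∈ S, G.degree v := by
    have hdeg : ∀ v, G.degree v = ∑ e ∈ G.edgeFinset, (if v ∈ e then 1 else 0) := by
      intro v
      rw [← Finset.card_filter, ← SimpleGraph.incidenceFinset_eq_filter,
        SimpleGraph.card_incidenceFinset_eq_degree]
    calc ∑ e ∈ G.edgeFinset, w e
        = ∑ e ∈ G.edgeFinset, ∑ v ∈ S, (if v ∈ e then 1 else 0) := by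
          apply Finset.sum_congr rfl
          intro e he
          have hnd : ¬ e.IsDiag := by
            rw [SimpleGraph.mem_edgeFinset] at he
            exact G.not_isDiag_of_mem_edgeSet he
          induction e using Sym2.ind with
          | _ x y =>
            have hxy : x ≠ y := by simpa using hnd
            have : ∑ v ∈ S, (if v ∈ (s(x,y) : Sym2 V) then 1 else 0)
                = ∑ v ∈ S, (if v = x ∨ v = y then 1 else 0) := by
              apply Finset.sum_congr rfl; intro v _; simp [Sym2.mem_iff]
            rw [this, Finset.sum_filter]
            have hpt : ∀ v : V, (if τ v = true then (if v = x ∨ v = y then 1 else 0) else 0)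
                = (if v = x ∨ v = y then (if τ v = true then 1 else 0) else 0) := by
              intro v; by_cases h1 : τ v = true <;> by_cases h2 : v = x ∨ v = y <;> simp [h1, h2]
            rw [Finset.sum_congr rfl (fun v _ => hpt v), ← Finset.sum_filter]
            have hfil : (univ.filter fun v => v = x ∨ v = y) = ({x, y} : Finset V) := by
              ext v; simp
            rw [hfil, Finset.sum_insert (by simpa using hxy), Finset.sum_singleton]
            simp [hw]
      _ = ∑ v ∈ S, ∑ e ∈ G.edgeFinset, (if v ∈ e then 1 else 0) := Finset.sum_comm
      _ = ∑ v ∈ S, G.degree v := by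
          apply Finset.sum_congr rfl; intro v _; rw [hdeg v]
  have hdegS : ∑ v ∈ S, G.degree v = 3 * S.card := by
    rw [Finset.sum_congr rfl (fun v _ => hreg v), Finset.sum_const, smul_eq_mul, mul_comm]
  -- Step A: sum of weights equals e11 + (m - e00)
  have hwval : ∀ e, w e = (if bothVal τ true e then 1 else 0)
      + (if bothVal τ false e then 0 else 1) := by
    intro e
    induction e using Sym2.ind with
    | _ x y =>
      cases hx : τ x <;> cases hy : τ y <;> simp [hw, bothVal, hx, hy]
  have hA : ∑ e ∈ G.edgeFinset, w e + e00 G τ = e11 G τ + G.edgeFinset.card := by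
    rw [Finset.sum_congr rfl (fun e _ => hwval e), Finset.sum_add_distrib]
    have h1 : ∑ e ∈ G.edgeFinset, (if bothVal τ true e then 1 else 0) = e11 G τ := by
      rw [e11, Finset.card_filter]
    have h2 : ∑ e ∈ G.edgeFinset, (if bothVal τ false e then 0 else 1)
        = G.edgeFinset.card - e00 G τ := by
      have := Finset.card_filter_add_card_filter_not
        (s := G.edgeFinset) (p := fun e => bothVal τ false e = true)
      rw [show (∑ e ∈ G.edgeFinset, if bothVal τ false e then 0 else 1)
        = (G.edgeFinset.filter fun e => ¬ (bothVal τ false e = true)).card from ?_]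
      · have he : (G.edgeFinset.filter fun e => bothVal τ false e = true).card = e00 G τ := rfl
        omega
      · rw [Finset.card_filter]
        apply Finset.sum_congr rfl
        intro e _
        by_cases h : bothVal τ false e = true <;> simp [h]
    have hle : e00 G τ ≤ G.edgeFinset.card := Finset.card_filter_le _ _
    rw [h1, h2]
    omega
  omega

/-- For a finite simple 3-regular graph `G`, if `ab = a'b'` and
`a³+b³ = a'³+b'³`, then `Z_G(a,b) = Z_G(a',b')`. -/
theorem Z_eq_of_X_Y_eq {V : Type*} [Fintype V] [DecidableEq V]
    (G : SimpleGraph V) [DecidableRel G.Adj] (hreg : G.IsRegularOfDegree 3)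
    (a b a' b' : ℂ) (hX : a * b = a' * b') (hY : a ^ 3 + b ^ 3 = a' ^ 3 + b' ^ 3) :
    Z G a b = Z G a' b' := by
  classical
  -- 3 divides the number of edges
  obtain ⟨m', hm'⟩ : 3 ∣ G.edgeFinset.card := by
    have h2 : ∑ v : V, G.degree v = 2 * G.edgeFinset.card :=
      SimpleGraph.sum_degrees_eq_twice_card_edges G
    have h3 : ∑ v : V, G.degree v = 3 * Fintype.card V := by
      rw [Finset.sum_congr rfl (fun v _ => hreg v), Finset.sum_const, smul_eq_mul,
        Finset.card_univ, mul_comm]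
    have : (3 : ℕ) ∣ 2 * G.edgeFinset.card := ⟨Fintype.card V, by omega⟩
    exact (Nat.Coprime.dvd_of_dvd_mul_left (by norm_num) this)
  -- pair each τ with its complement
  have hpair : ∀ τ : V → Bool,
      a ^ e00 G τ * b ^ e11 G τ + a ^ e11 G τ * b ^ e00 G τ
      = a' ^ e00 G τ * b' ^ e11 G τ + a' ^ e11 G τ * b' ^ e00 G τ := by
    intro τ
    have hc := counting G hreg τ
    set c := e00 G τ
    set d := e11 G τ
    set k := (univ.filter fun v => τ v = true).card
    rcases le_total d c with hle | hle
    · obtain ⟨t, ht⟩ : ∃ t, c = d + 3 * t := ⟨m' - k, by omega⟩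
      rw [ht]
      exact key_alg a b a' b' hX hY d t
    · obtain ⟨t, ht⟩ : ∃ t, d = c + 3 * t := ⟨k - m', by omega⟩
      rw [ht]
      have := key_alg b a b' a' (by rw [mul_comm, hX, mul_comm]) (by rw [add_comm, hY, add_comm]) c t
      linear_combination this
  -- reindex by complement
  have hswap : ∀ (x y : ℂ), Z G x y = ∑ τ : V → Bool, x ^ e11 G τ * y ^ e00 G τ := by
    intro x y
    rw [Z]
    refine Fintype.sum_equiv ⟨fun τ v => !τ v, fun τ v => !τ v,
      fun τ => by funext v; simp, fun τ => by funext v; simp⟩ _ _ ?_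
    intro τ
    simp only [Equiv.coe_fn_mk]
    rw [e00_not, e11_not]
  have hdouble : Z G a b + Z G a b = Z G a' b' + Z G a' b' := by
    nth_rewrite 2 [hswap a b]
    nth_rewrite 2 [hswap a' b']
    rw [Z, Z, ← Finset.sum_add_distrib, ← Finset.sum_add_distrib]
    exact Finset.sum_congr rfl (fun τ _ => hpair τ)
  have : (2 : ℂ) * Z G a b = 2 * Z G a' b' := by ring_nf; linear_combination hdouble
  exact mul_left_cancel₀ two_ne_zero this
end

section
/- Let M be a 2×2 complex matrix, let v₁, v₂ be nonzero vectors in ℂ² with M v₁ = λ₁ v₁ and M v₂ = λ₂ v₂, where λ₁ and λ₂ are nonzero complex numbers such that (λ₁/λ₂)^n ≠ 1 for every positive integer n. Let v = c₁ v₁ + c₂ v₂ with c₁ ≠ 0 and c₂ ≠ 0. Then for all natural numbers i ≠ j, the vectors M^i v and M^j v are linearly independent. -/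
/-- Let `M` be a `2×2` complex matrix with eigenvectors `v₁, v₂` for nonzero
eigenvalues `λ₁, λ₂` whose ratio is not a root of unity, and let `v = c₁v₁ + c₂v₂` with
`c₁, c₂ ≠ 0`. Then `Mⁱv` and `Mʲv` are linearly independent for all `i ≠ j`. -/
theorem iterates_pairwise_linearIndependent (M : Matrix (Fin 2) (Fin 2) ℂ)
    (v₁ v₂ : Fin 2 → ℂ) (hv₁ : v₁ ≠ 0) (hv₂ : v₂ ≠ 0) (lam₁ lam₂ : ℂ)
    (hM₁ : M.mulVec v₁ = lam₁ • v₁) (hM₂ : M.mulVec v₂ = lam₂ • v₂)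
    (hlam₁ : lam₁ ≠ 0) (hlam₂ : lam₂ ≠ 0)
    (hratio : ∀ n : ℕ, 0 < n → (lam₁ / lam₂) ^ n ≠ 1)
    (c₁ c₂ : ℂ) (hc₁ : c₁ ≠ 0) (hc₂ : c₂ ≠ 0) (v : Fin 2 → ℂ) (hv : v = c₁ • v₁ + c₂ • v₂) :
    ∀ i j : ℕ, i ≠ j →
      LinearIndependent ℂ ![(M ^ i).mulVec v, (M ^ j).mulVec v] := by
  subst hv
  -- eigenvalues are distinct
  have hne : lam₁ ≠ lam₂ := by
    intro h
    exact hratio 1 one_pos (by rw [pow_one, h, div_self hlam₂])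
  -- key arithmetic fact
  have key : ∀ i j : ℕ, i ≠ j → lam₁ ^ i * lam₂ ^ j ≠ lam₁ ^ j * lam₂ ^ i := by
    intro i j hij h
    rcases Nat.lt_or_ge j i with hlt | hge
    case _ =>
      obtain ⟨d, rfl⟩ : ∃ d, i = j + d := ⟨i - j, by omega⟩
      have hd : 0 < d := by omega
      have h1 : (lam₁ ^ j * lam₂ ^ j) * lam₁ ^ d = (lam₁ ^ j * lam₂ ^ j) * lam₂ ^ d := by
        rw [pow_add, pow_add] at h
        linear_combination h
      have h2 := mul_left_cancel₀
        (mul_ne_zero (pow_ne_zero j hlam₁) (pow_ne_zero j hlam₂)) h1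
      exact hratio d hd (by rw [div_pow, h2, div_self (pow_ne_zero d hlam₂)])
    case _ =>
      have hlt : i < j := by omega
      obtain ⟨d, rfl⟩ : ∃ d, j = i + d := ⟨j - i, by omega⟩
      have hd : 0 < d := by omega
      have h1 : (lam₁ ^ i * lam₂ ^ i) * lam₁ ^ d = (lam₁ ^ i * lam₂ ^ i) * lam₂ ^ d := by
        rw [pow_add, pow_add] at h
        linear_combination -h
      have h2 := mul_left_cancel₀
        (mul_ne_zero (pow_ne_zero i hlam₁) (pow_ne_zero i hlam₂)) h1
      exact hratio d hd (by rw [div_pow, h2, div_self (pow_ne_zero d hlam₂)])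
  -- iterates formula
  have hpow : ∀ k : ℕ, (M ^ k).mulVec (c₁ • v₁ + c₂ • v₂)
      = (c₁ * lam₁ ^ k) • v₁ + (c₂ * lam₂ ^ k) • v₂ := by
    intro k
    induction k with
    | zero => simp
    | succ n ih =>
      rw [pow_succ', ← Matrix.mulVec_mulVec, ih, Matrix.mulVec_add,
        Matrix.mulVec_smul, Matrix.mulVec_smul, hM₁, hM₂, pow_succ, pow_succ]
      module
  -- independence of eigenvectors
  have hli : ∀ a b : ℂ, a • v₁ + b • v₂ = 0 → a = 0 ∧ b = 0 := by
    intro a b hab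
    have hM : (a * lam₁) • v₁ + (b * lam₂) • v₂ = 0 := by
      have h := congrArg M.mulVec hab
      simpa [Matrix.mulVec_add, Matrix.mulVec_smul, hM₁, hM₂, smul_smul] using h
    have h3 : (a * (lam₁ - lam₂)) • v₁ = 0 := by
      calc (a * (lam₁ - lam₂)) • v₁
          = ((a * lam₁) • v₁ + (b * lam₂) • v₂) - lam₂ • (a • v₁ + b • v₂) := by module
        _ = 0 - lam₂ • (0 : Fin 2 → ℂ) := by rw [hM, hab]
        _ = 0 := by simp
    have ha : a = 0 := by
      rcases smul_eq_zero.mp h3 with h | h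
      · rcases mul_eq_zero.mp h with h | h
        · exact h
        · exact absurd (sub_eq_zero.mp h) hne
      · exact absurd h hv₁
    refine ⟨ha, ?_⟩
    have hb : b • v₂ = 0 := by
      rw [ha, zero_smul, zero_add] at hab; exact hab
    rcases smul_eq_zero.mp hb with h | h
    · exact h
    · exact absurd h hv₂
  intro i j hij
  rw [LinearIndependent.pair_iff]
  intro s t hst
  rw [hpow, hpow] at hst
  have hst' : (s * (c₁ * lam₁ ^ i) + t * (c₁ * lam₁ ^ j)) • v₁
      + (s * (c₂ * lam₂ ^ i) + t * (c₂ * lam₂ ^ j)) • v₂ = 0 := by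
    rw [← hst]; module
  obtain ⟨e₁, e₂⟩ := hli _ _ hst'
  have f₁ : s * lam₁ ^ i + t * lam₁ ^ j = 0 := by
    have h : c₁ * (s * lam₁ ^ i + t * lam₁ ^ j) = 0 := by linear_combination e₁
    exact (mul_eq_zero.mp h).resolve_left hc₁
  have f₂ : s * lam₂ ^ i + t * lam₂ ^ j = 0 := by
    have h : c₂ * (s * lam₂ ^ i + t * lam₂ ^ j) = 0 := by linear_combination e₂
    exact (mul_eq_zero.mp h).resolve_left hc₂
  have hs : s = 0 := by
    by_contra hs
    have h : s * (lam₁ ^ i * lam₂ ^ j - lam₁ ^ j * lam₂ ^ i) = 0 := by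
      linear_combination lam₂ ^ j * f₁ - lam₁ ^ j * f₂
    rcases mul_eq_zero.mp h with h | h
    · exact hs h
    · exact key i j hij (sub_eq_zero.mp h)
  refine ⟨hs, ?_⟩
  rw [hs, zero_mul, zero_add] at f₁
  exact (mul_eq_zero.mp f₁).resolve_right (pow_ne_zero j hlam₁)
end

section
/- Let a be a real number with a ∉ {0, 1, −1}, let M(a) = [[a³+1, a²+a], [a²+a, a³+1]], and define vectors vᵢ = M(a)^i · (a,1)ᵀ ∈ ℝ² for i ∈ ℕ. Then the vectors vᵢ are pairwise linearly independent: for all natural numbers i ≠ j, vᵢ and vⱼ are not proportional. -/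
private lemma vec_formula (a : ℝ) : ∀ i : ℕ,
    ((!![a ^ 3 + 1, a ^ 2 + a; a ^ 2 + a, a ^ 3 + 1]) ^ i).mulVec ![a, 1] =
      ![(a + 1) / 2 * ((a + 1) * (a ^ 2 + 1)) ^ i
          + (a - 1) / 2 * ((a + 1) * (a - 1) ^ 2) ^ i,
        (a + 1) / 2 * ((a + 1) * (a ^ 2 + 1)) ^ i
          - (a - 1) / 2 * ((a + 1) * (a - 1) ^ 2) ^ i] := by
  intro i
  induction i with
  | zero =>
    funext k
    fin_cases k <;> simp <;> ring
  | succ n ih =>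
    rw [pow_succ', ← Matrix.mulVec_mulVec, ih]
    funext k
    fin_cases k <;>
      simp [Matrix.mulVec, dotProduct, Fin.sum_univ_two] <;> ring

/-- For real `a ∉ {0, 1, −1}`, the iterated signature vectors
`vᵢ = M(a)ⁱ · (a,1)ᵀ`, where `M(a) = [[a³+1, a²+a], [a²+a, a³+1]]`, are pairwise linearly
independent. -/
theorem iterated_signature_vectors_pairwise_linearIndependent (a : ℝ)
    (ha0 : a ≠ 0) (ha1 : a ≠ 1) (ha2 : a ≠ -1) :
    ∀ i j : ℕ, i ≠ j →
      LinearIndependent ℝ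
        ![((!![a ^ 3 + 1, a ^ 2 + a; a ^ 2 + a, a ^ 3 + 1]) ^ i).mulVec ![a, 1],
          ((!![a ^ 3 + 1, a ^ 2 + a; a ^ 2 + a, a ^ 3 + 1]) ^ j).mulVec ![a, 1]] := by
  -- eigenvalue notation
  set Lp : ℝ := (a + 1) * (a ^ 2 + 1) with hLp
  set Lm : ℝ := (a + 1) * (a - 1) ^ 2 with hLm
  have ha1' : a - 1 ≠ 0 := sub_ne_zero.mpr ha1
  have ha2' : a + 1 ≠ 0 := fun h => ha2 (by linarith)
  have hLp0 : Lp ≠ 0 := mul_ne_zero ha2' (by positivity)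
  have hLm0 : Lm ≠ 0 := mul_ne_zero ha2' (pow_ne_zero _ ha1')
  have habs : |Lp| ≠ |Lm| := by
    rw [hLp, hLm, abs_mul, abs_mul, abs_of_pos (by positivity : (0:ℝ) < a ^ 2 + 1),
      abs_of_pos (by positivity : (0:ℝ) < (a - 1) ^ 2)]
    intro h
    have := mul_left_cancel₀ (abs_ne_zero.mpr ha2') h
    apply ha0
    nlinarith
  -- key: powers differ
  have hpow : ∀ k : ℕ, k ≠ 0 → Lp ^ k ≠ Lm ^ k := by
    intro k hk h
    apply habs
    have : |Lp| ^ k = |Lm| ^ k := by rw [← abs_pow, ← abs_pow, h]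
    exact (pow_left_inj₀ (abs_nonneg _) (abs_nonneg _) hk).mp this
  -- the determinant is nonzero
  have hdet : ∀ i j : ℕ, i ≠ j → Lp ^ i * Lm ^ j ≠ Lp ^ j * Lm ^ i := by
    have main : ∀ i j : ℕ, j < i → Lp ^ i * Lm ^ j ≠ Lp ^ j * Lm ^ i := by
      intro i j hij h
      obtain ⟨k, rfl⟩ : ∃ k, i = j + k := ⟨i - j, (Nat.add_sub_cancel' hij.le).symm⟩
      have hk : k ≠ 0 := by omega
      apply hpow k hk
      have h' : (Lp ^ j * Lm ^ j) * Lp ^ k = (Lp ^ j * Lm ^ j) * Lm ^ k := by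
        rw [pow_add, pow_add] at h; ring_nf at h ⊢; linarith
      exact mul_left_cancel₀ (mul_ne_zero (pow_ne_zero _ hLp0) (pow_ne_zero _ hLm0)) h'
    intro i j hij
    rcases hij.lt_or_gt with h | h
    · exact fun he => main j i h he.symm
    · exact main i j h
  intro i j hij
  rw [vec_formula, vec_formula, LinearIndependent.pair_iff]
  intro s t hst
  set p : ℝ := (a + 1) / 2 * Lp ^ i with hp
  set q : ℝ := (a - 1) / 2 * Lm ^ i with hq
  set r : ℝ := (a + 1) / 2 * Lp ^ j with hr
  set w : ℝ := (a - 1) / 2 * Lm ^ j with hw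
  have h0 := congrFun hst 0
  have h1 := congrFun hst 1
  simp [Matrix.cons_val_zero, Matrix.cons_val_one] at h0 h1
  have e1 : s * p + t * r = 0 := by linarith
  have e2 : s * q + t * w = 0 := by linarith
  have hD : p * w - q * r ≠ 0 := by
    rw [hp, hq, hr, hw]
    intro h
    apply hdet i j hij
    have hc : ((a + 1) / 2 * (a - 1) / 2) ≠ 0 := by
      simp only [div_ne_zero_iff]
      exact ⟨mul_ne_zero (div_ne_zero ha2' two_ne_zero) ha1', two_ne_zero⟩
    have h' : ((a + 1) / 2 * (a - 1) / 2) * (Lp ^ i * Lm ^ j)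
        = ((a + 1) / 2 * (a - 1) / 2) * (Lp ^ j * Lm ^ i) := by ring_nf; ring_nf at h; linarith
    exact mul_left_cancel₀ hc h'
  constructor
  · have : s * (p * w - q * r) = 0 := by linear_combination w * e1 - r * e2
    exact (mul_eq_zero.mp this).resolve_right hD
  · have : t * (p * w - q * r) = 0 := by linear_combination p * e2 - q * e1
    exact (mul_eq_zero.mp this).resolve_right hD
end
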